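/- The map f ramifies at the origin: for every neighborhood U of 0⃗ in R^n there exist distinct points a, b ∈ U with f(a) = f(b); equivalently, f is injective on no neighborhood of 0⃗. -/

import Mathlib

/- Context: `R` is a linearly ordered field with its order topology, `V ⊆ R` a convex
subring, `ε ∈ V` positive with `ε⁻¹ ∉ V`, and `n = m + 2 ≥ 2`.  The space `R^n` is
`Fin (m + 2) → R` with the product topology; the last coordinate is `Fin.last (m + 1)`. -/

noncomputable section

/-- `sSum m x = x₁² + ⋯ + x_{n-1}²` (the sum of squares of all but the last coordinate). -/
def sSum {R : Type*} [Field R] [LinearOrder R] [IsStrictOrderedRing R] (m : ℕ) (x : Fin (m + 2) → R) : R :=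
  ∑ i : Fin (m + 1), x i.castSucc ^ 2

/-- `A = { x ≠ 0 : xₙ² = a·(x₁² + ⋯ + x_{n-1}²) for some a ∈ V }`. -/
def setA {R : Type*} [Field R] [LinearOrder R] [IsStrictOrderedRing R] (V : Subring R) (m : ℕ) :
    Set (Fin (m + 2) → R) :=
  {x | x ≠ 0 ∧ ∃ a ∈ V, x (Fin.last (m + 1)) ^ 2 = a * sSum m x}

/-- `B = (R^n \ {0}) \ A`. -/
def setB {R : Type*} [Field R] [LinearOrder R] [IsStrictOrderedRing R] (V : Subring R) (m : ℕ) :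
    Set (Fin (m + 2) → R) :=
  {x | x ≠ 0} \ setA V m

/-- `h(x₁,…,xₙ) = (x₁,…,x_{n-1}, ε·xₙ)`. -/
def hMap {R : Type*} [Field R] [LinearOrder R] [IsStrictOrderedRing R] (ε : R) (m : ℕ) (x : Fin (m + 2) → R) :
    Fin (m + 2) → R :=
  Function.update x (Fin.last (m + 1)) (ε * x (Fin.last (m + 1)))

/-- `f(0) = 0`, `f = id` on `A`, `f = h` on `B`. -/
def fMap {R : Type*} [Field R] [LinearOrder R] [IsStrictOrderedRing R] (V : Subring R) (ε : R) (m : ℕ)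
    (x : Fin (m + 2) → R) : Fin (m + 2) → R := by
  classical
  exact if x = 0 then 0 else if x ∈ setA V m then x else hMap ε m x

end

/-!
Points on the line `xₙ = x₁` (with the other coordinates zero) lie in `A` and are fixed by `f`,
while on the steeper line `xₙ = ε⁻¹ x₁` the ratio `xₙ² / s(x) = ε⁻²` is not in `V` (otherwise
`ε⁻¹ = ε · ε⁻²` would be), so these points lie in `B` and `h` maps them onto the first line.
Both lines pass through the origin, so every neighbourhood of `0` contains a pair of distinct
points, one on each line, with the same image.
-/

open Filter Topology

theorem exists_ne_zero_smul_mem_of_mem_nhds {K E : Type*} [Zero K] [TopologicalSpace K]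
    [NeBot (𝓝[≠] (0 : K))] [Zero E] [TopologicalSpace E] [SMulWithZero K E] [ContinuousSMul K E]
    {U : Set E} (hU : U ∈ 𝓝 0) (v w : E) : ∃ t : K, t ≠ 0 ∧ t • v ∈ U ∧ t • w ∈ U := by
  have tendsto_smul (u : E) : Tendsto (fun t : K => t • u) (𝓝[≠] 0) (𝓝 0) :=
    ((continuous_id.smul continuous_const).tendsto' (0 : K) 0 (zero_smul K u)).mono_left
      nhdsWithin_le_nhds
  obtain ⟨t, ⟨hv, hw⟩, ht⟩ := (((tendsto_smul v).eventually_mem hU).and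
    ((tendsto_smul w).eventually_mem hU)).and self_mem_nhdsWithin |>.exists
  exact ⟨t, ht, hv, hw⟩

section

variable {R : Type*} [Field R] {m : ℕ} {c t : R}

def slopeVec (m : ℕ) (c : R) : Fin (m + 2) → R :=
  Fin.snoc (Pi.single 0 1) c

theorem smul_slopeVec_last : (t • slopeVec m c) (Fin.last (m + 1)) = t * c := by
  simp [slopeVec]

theorem smul_slopeVec_ne_zero (ht : t ≠ 0) : t • slopeVec m c ≠ 0 := by
  intro h
  have h0 := congrFun h (0 : Fin (m + 1)).castSucc
  simp [slopeVec, ht] at h0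

theorem smul_slopeVec_injective (ht : t ≠ 0) :
    Function.Injective (fun c : R => t • slopeVec m c) := by
  intro c c' h
  have hlast := congrFun h (Fin.last (m + 1))
  simp only [smul_slopeVec_last] at hlast
  exact mul_left_cancel₀ ht hlast

end

section

variable {R : Type*} [Field R] [LinearOrder R] [IsStrictOrderedRing R] {m : ℕ} {c t : R}

theorem fMap_of_mem_setA {V : Subring R} {ε : R} {x : Fin (m + 2) → R} (hx : x ∈ setA V m) :
    fMap V ε m x = x := by
  simp [fMap, hx.1, hx]

theorem fMap_of_ne_zero_of_notMem_setA {V : Subring R} {ε : R} {x : Fin (m + 2) → R}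
    (hx : x ≠ 0) (hxA : x ∉ setA V m) : fMap V ε m x = hMap ε m x := by
  simp [fMap, hx, hxA]

theorem sSum_smul_slopeVec : sSum m (t • slopeVec m c) = t ^ 2 := by
  simp [sSum, slopeVec, Pi.single_apply, ite_pow]

theorem smul_slopeVec_mem_setA_iff (V : Subring R) (ht : t ≠ 0) :
    t • slopeVec m c ∈ setA V m ↔ c ^ 2 ∈ V := by
  have ht2 : t ^ 2 ≠ 0 := pow_ne_zero 2 ht
  simp only [setA, Set.mem_ofPred_eq, smul_slopeVec_ne_zero ht, ne_eq, not_false_eq_true,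
    true_and, smul_slopeVec_last, sSum_smul_slopeVec]
  constructor
  · rintro ⟨a, ha, hca⟩
    rw [mul_pow, mul_comm] at hca
    rwa [mul_right_cancel₀ ht2 hca]
  · exact fun hc => ⟨c ^ 2, hc, by ring⟩

theorem hMap_smul_slopeVec (ε : R) : hMap ε m (t • slopeVec m c) = t • slopeVec m (ε * c) := by
  ext i
  induction i using Fin.lastCases with
  | last => simp only [hMap, Function.update_self, smul_slopeVec_last]; ring
  | cast i => simp [hMap, slopeVec, (Fin.castSucc_lt_last i).ne]

theorem fMap_smul_slopeVec_one (V : Subring R) (ε : R) (ht : t ≠ 0) :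
    fMap V ε m (t • slopeVec m 1) = t • slopeVec m 1 :=
  fMap_of_mem_setA ((smul_slopeVec_mem_setA_iff V ht).2 (by simp [V.one_mem]))

theorem fMap_smul_slopeVec_inv {V : Subring R} {ε : R} (hε0 : ε ≠ 0) (hεV : ε ∈ V)
    (hεinv : ε⁻¹ ∉ V) (ht : t ≠ 0) : fMap V ε m (t • slopeVec m ε⁻¹) = t • slopeVec m 1 := by
  have hnotA : t • slopeVec m ε⁻¹ ∉ setA V m := by
    rw [smul_slopeVec_mem_setA_iff V ht]
    intro hsq
    apply hεinv
    simpa [sq, ← mul_assoc, mul_inv_cancel₀ hε0] using V.mul_mem hεV hsq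
  rw [fMap_of_ne_zero_of_notMem_setA (smul_slopeVec_ne_zero ht) hnotA, hMap_smul_slopeVec,
    mul_inv_cancel₀ hε0]

end

theorem statement_8_general {R : Type*} [Field R] [LinearOrder R] [IsStrictOrderedRing R] [TopologicalSpace R] [OrderTopology R]
    (V : Subring R)
    (ε : R) (hε0 : 0 < ε) (hεV : ε ∈ V) (hεinv : ε⁻¹ ∉ V) (m : ℕ) :
    (∀ U ∈ nhds (0 : Fin (m + 2) → R), ∃ a ∈ U, ∃ b ∈ U, a ≠ b ∧ fMap V ε m a = fMap V ε m b) ∧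
    ¬ ∃ U ∈ nhds (0 : Fin (m + 2) → R), Set.InjOn (fMap V ε m) U := by
  have hεinv_ne_one : ε⁻¹ ≠ 1 := fun h => hεinv (h ▸ V.one_mem)
  have ramifies : ∀ U ∈ 𝓝 (0 : Fin (m + 2) → R),
      ∃ a ∈ U, ∃ b ∈ U, a ≠ b ∧ fMap V ε m a = fMap V ε m b := by
    intro U hU
    obtain ⟨t, ht, hone, hinv⟩ :=
      exists_ne_zero_smul_mem_of_mem_nhds (K := R) hU (slopeVec m 1) (slopeVec m ε⁻¹)
    refine ⟨_, hone, _, hinv, fun h => hεinv_ne_one (smul_slopeVec_injective ht h).symm, ?_⟩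
    rw [fMap_smul_slopeVec_one V ε ht, fMap_smul_slopeVec_inv hε0.ne' hεV hεinv ht]
  refine ⟨ramifies, fun ⟨U, hU, hinj⟩ => ?_⟩
  obtain ⟨a, ha, b, hb, hab, hfab⟩ := ramifies U hU
  exact hab (hinj ha hb hfab)

/-- `f` ramifies at the origin: every neighborhood of `0` contains two
distinct points with the same image; equivalently, `f` is injective on no neighborhood
of `0`. -/
theorem statement_8 {R : Type*} [Field R] [LinearOrder R] [IsStrictOrderedRing R] [TopologicalSpace R] [OrderTopology R]
    (V : Subring R) (hV : ∀ x y : R, y ∈ V → |x| ≤ |y| → x ∈ V)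
    (ε : R) (hε0 : 0 < ε) (hεV : ε ∈ V) (hεinv : ε⁻¹ ∉ V) (m : ℕ) :
    (∀ U ∈ nhds (0 : Fin (m + 2) → R), ∃ a ∈ U, ∃ b ∈ U, a ≠ b ∧ fMap V ε m a = fMap V ε m b) ∧
    ¬ ∃ U ∈ nhds (0 : Fin (m + 2) → R), Set.InjOn (fMap V ε m) U :=
  statement_8_general V ε hε0 hεV hεinv m
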